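/- arXiv:1112.4665 — 2 statements merged into one kernel-verified Lean document; each statement's English description precedes it below -/
import Mathlib

section
/- Let $a \in \mathbb{R}^n$ with all $a_i > 0$. For $1 \le k \le n-1$, the Newton (Maclaurin-type) inequality $\frac{\sigma_{k+1}(a)}{\sigma_k(a)} \le \frac{\sigma_k(a)}{\sigma_{k-1}(a)}$ holds; that is, the quotient $\sigma_{k+1}(a)/\sigma_k(a)$ is non-increasing in $k$. -/
open Finset

/-- The `k`-th elementary symmetric function of the variables `a i` for `i ∈ s`. -/
noncomputable def esym {n : ℕ} (s : Finset (Fin n)) (k : ℕ) (a : Fin n → ℝ) : ℝ :=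
  ∑ T ∈ s.powersetCard k, ∏ i ∈ T, a i

lemma esym_zero {n : ℕ} (s : Finset (Fin n)) (a : Fin n → ℝ) : esym s 0 a = 1 := by
  simp [esym]

lemma esym_nonneg {n : ℕ} (s : Finset (Fin n)) (k : ℕ) (a : Fin n → ℝ)
    (hpos : ∀ i, 0 < a i) : 0 ≤ esym s k a := by
  apply Finset.sum_nonneg
  intro T _
  exact Finset.prod_nonneg fun i _ => (hpos i).le

lemma esym_pos {n : ℕ} (s : Finset (Fin n)) (k : ℕ) (a : Fin n → ℝ)
    (hpos : ∀ i, 0 < a i) (hk : k ≤ s.card) : 0 < esym s k a := by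
  apply Finset.sum_pos
  · intro T _
    exact Finset.prod_pos fun i _ => hpos i
  · exact Finset.powersetCard_nonempty.2 hk

lemma esym_eq_zero {n : ℕ} (s : Finset (Fin n)) (k : ℕ) (a : Fin n → ℝ)
    (hk : s.card < k) : esym s k a = 0 := by
  rw [esym, Finset.powersetCard_eq_empty.2 hk, Finset.sum_empty]

lemma esym_insert {n : ℕ} (s : Finset (Fin n)) (i : Fin n) (hi : i ∉ s) (m : ℕ)
    (a : Fin n → ℝ) :
    esym (insert i s) (m + 1) a = esym s (m + 1) a + a i * esym s m a := by
  have hdisj : Disjoint (Finset.powersetCard (m + 1) s)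
      ((Finset.powersetCard m s).image (insert i)) := by
    rw [Finset.disjoint_left]
    intro T hT hT2
    rw [Finset.mem_powersetCard] at hT
    rw [Finset.mem_image] at hT2
    obtain ⟨U, hU, rfl⟩ := hT2
    exact (fun h => hi (hT.1 h)) (Finset.mem_insert_self i U)
  have hinj : ∀ T ∈ Finset.powersetCard m s, ∀ U ∈ Finset.powersetCard m s,
      insert i T = insert i U → T = U := by
    intro T hT U hU h
    rw [Finset.mem_powersetCard] at hT hU
    have hiT : i ∉ T := fun h => hi (hT.1 h)
    have hiU : i ∉ U := fun h => hi (hU.1 h)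
    rw [← Finset.erase_insert hiT, h, Finset.erase_insert hiU]
  have key : ∑ T ∈ (Finset.powersetCard m s).image (insert i), ∏ j ∈ T, a j
      = a i * esym s m a := by
    rw [Finset.sum_image hinj, esym, Finset.mul_sum]
    apply Finset.sum_congr rfl
    intro T hT
    rw [Finset.mem_powersetCard] at hT
    exact Finset.prod_insert fun h => hi (hT.1 h)
  rw [esym, Finset.powersetCard_succ_insert hi, Finset.sum_union hdisj, key, esym]
  rfl

lemma esym_log_concave {n : ℕ} (a : Fin n → ℝ) (hpos : ∀ i, 0 < a i)
    (s : Finset (Fin n)) : ∀ m : ℕ,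
    esym s m a * esym s (m + 2) a ≤ esym s (m + 1) a ^ 2 := by
  induction s using Finset.induction with
  | empty =>
    intro m
    have h2 : esym (∅ : Finset (Fin n)) (m + 2) a = 0 := esym_eq_zero _ _ _ (by simp)
    have h1 : esym (∅ : Finset (Fin n)) (m + 1) a = 0 := esym_eq_zero _ _ _ (by simp)
    rw [h1, h2]; nlinarith
  | @insert i s hi ih =>
    intro m
    have hb : 0 ≤ a i := (hpos i).le
    match m with
    | 0 =>
      rw [esym_zero, esym_insert s i hi 1 a, esym_insert s i hi 0 a, esym_zero]
      have h0 := ih 0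
      rw [esym_zero] at h0
      have h1 : 0 ≤ esym s 1 a := esym_nonneg _ _ _ hpos
      nlinarith
    | (m + 1) =>
      rw [esym_insert s i hi (m + 2) a, esym_insert s i hi (m + 1) a,
        esym_insert s i hi m a]
      have h1 : esym s (m + 1) a * esym s (m + 3) a ≤ esym s (m + 2) a ^ 2 := ih (m + 1)
      have h2 := ih m
      have hcross : esym s m a * esym s (m + 3) a ≤ esym s (m + 1) a * esym s (m + 2) a := by
        by_cases hc : m + 3 ≤ s.card
        · have p1 : 0 < esym s (m + 1) a := esym_pos _ _ _ hpos (by omega)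
          have p2 : 0 < esym s (m + 2) a := esym_pos _ _ _ hpos (by omega)
          nlinarith [mul_le_mul h2 h1 (mul_nonneg p1.le (esym_nonneg s (m+3) a hpos)) (sq_nonneg (esym s (m+1) a)), mul_pos p1 p2]
        · rw [esym_eq_zero s (m + 3) a (by omega), mul_zero]
          exact mul_nonneg (esym_nonneg _ _ _ hpos) (esym_nonneg _ _ _ hpos)
      nlinarith [mul_le_mul_of_nonneg_left hcross hb, mul_le_mul_of_nonneg_left h2 (mul_nonneg hb hb)]

/-- Newton inequality: σ_{k+1}(a)/σ_k(a) ≤ σ_k(a)/σ_{k-1}(a) for positive tuples. -/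
theorem stmt_7 (n k : ℕ) (hk : 1 ≤ k) (hkn : k ≤ n - 1)
    (a : Fin n → ℝ) (hpos : ∀ i, 0 < a i) :
    esym Finset.univ (k + 1) a / esym Finset.univ k a
      ≤ esym Finset.univ k a / esym Finset.univ (k - 1) a := by
  have hn : 1 ≤ n := by omega
  have hcard : (Finset.univ : Finset (Fin n)).card = n := by simp
  have hk0 : 0 < esym Finset.univ k a := esym_pos _ _ _ hpos (by omega)
  have hk1 : 0 < esym Finset.univ (k - 1) a := esym_pos _ _ _ hpos (by omega)
  rw [div_le_div_iff₀ hk0 hk1]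
  have := esym_log_concave a hpos (Finset.univ : Finset (Fin n)) (k - 1)
  have e1 : k - 1 + 1 = k := by omega
  have e2 : k - 1 + 2 = k + 1 := by omega
  rw [e1, e2] at this
  nlinarith
end

section
/- Let $n \ge 3$, $2 \le k \le n-1$, and suppose $a_1 = a_2 = \cdots = a_n = c > 0$ with $\sigma_k(a) = 1$. Then $c = \binom{n}{k}^{-1/k}$, and for this $a$, the function $\overline\omega_k(s) = \int_1^s (1 + \alpha t^{-n/2})^{1/k} dt$ (for any $\alpha > 0$, $s > 0$) satisfies the ODE $(\omega'(s))^k + \frac{2ks}{n}\,\omega''(s)(\omega'(s))^{k-1} = 1$ for all $s > 0$; consequently $u(x) = \overline\omega_k\left(\frac{c}{2}|x|^2\right)$ satisfies $\sigma_k(\lambda(D^2 u)) = 1$ in $\mathbb{R}^n \setminus \{0\}$. -/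
open Finset Matrix

/-- The Hessian matrix of `u : ℝⁿ → ℝ` at `x`. -/
noncomputable def hess {n : ℕ} (u : (Fin n → ℝ) → ℝ) (x : Fin n → ℝ) :
    Matrix (Fin n) (Fin n) ℝ :=
  fun i j => fderiv ℝ (fun y => fderiv ℝ u y (Pi.single j 1)) x (Pi.single i 1)

/-!
The integrand `φ(t) = (1 + α t^{-n/2})^{1/k}` of `ω̄_k` satisfies `φ^k = 1 + α t^{-n/2}`;
differentiating gives `k φ^{k-1} φ' = -(n/2) α t^{-n/2-1}`, which is the ODE. For a radial
function `u(x) = f(c|x|²/2)` the Hessian is `c f'(s) I + c² f''(s) x xᵀ`, with eigenvalues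
`c f'(s)` (`n - 1` times) and `c f'(s) + 2cs f''(s)`; Pascal's rule and
`k C(n,k) = n C(n-1,k-1)` turn `σ_k` of these into `C(n,k) c^k (f'^k + (2ks/n) f'' f'^{k-1})`.
For `f = ω̄_k` the bracket is `1` by the ODE, and `C(n,k) c^k = σ_k(a) = 1`.
-/

theorem esym_eq_esymm {n : ℕ} (s : Finset (Fin n)) (k : ℕ) (a : Fin n → ℝ) :
    esym s k a = (s.val.map a).esymm k :=
  (Finset.esymm_map_val a s k).symm

theorem Multiset.esymm_cons_succ {R : Type*} [CommSemiring R] (a : R) (s : Multiset R) (k : ℕ) :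
    (a ::ₘ s).esymm (k + 1) = s.esymm (k + 1) + a * s.esymm k := by
  simp [Multiset.esymm, Multiset.powersetCard_cons, Multiset.sum_map_mul_left]

theorem Multiset.esymm_replicate {R : Type*} [CommSemiring R] (m k : ℕ) (r : R) :
    (Multiset.replicate m r).esymm k = m.choose k * r ^ k := by
  have : Multiset.replicate m r = (univ : Finset (Fin m)).val.map fun _ => r := by simp
  rw [this, Finset.esymm_map_val,
    Finset.sum_congr rfl fun T hT => by rw [Finset.prod_const, (Finset.mem_powersetCard.mp hT).2],
    Finset.sum_const, Finset.card_powersetCard, card_univ, Fintype.card_fin, nsmul_eq_mul]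

theorem esym_const {n : ℕ} (s : Finset (Fin n)) (k : ℕ) (c : ℝ) :
    esym s k (fun _ => c) = (#s).choose k * c ^ k := by
  rw [esym_eq_esymm, Multiset.map_const', Finset.card_val, Multiset.esymm_replicate]

open Polynomial in
theorem Matrix.charpoly_smul_one_add_vecMulVec {R ι : Type*} [CommRing R] [Fintype ι]
    [DecidableEq ι] [Nonempty ι] (r : R) (u v : ι → R) :
    (r • (1 : Matrix ι ι R) + vecMulVec u v).charpoly
      = (((r + u ⬝ᵥ v) ::ₘ Multiset.replicate (Fintype.card ι - 1) r).map (X - C ·)).prod := by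
  have h := charpoly_sub_scalar (vecMulVec u v) (-r)
  rw [scalar_apply, ← smul_one_eq_diagonal, sub_eq_add_neg, ← neg_smul, neg_neg, add_comm,
    charpoly_vecMulVec] at h
  rw [h, Multiset.map_cons, Multiset.prod_cons, Multiset.map_replicate, Multiset.prod_replicate]
  nth_rewrite 1 [← Nat.sub_add_cancel (Fintype.card_pos (α := ι))]
  simp only [sub_comp, pow_comp, X_comp, mul_comp, C_comp, C_neg, map_add, smul_eq_C_mul]
  ring

theorem Matrix.IsHermitian.map_eigenvalues_eq_roots {ι : Type*} [Fintype ι] [DecidableEq ι]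
    {A : Matrix ι ι ℝ} (hA : A.IsHermitian) : univ.val.map hA.eigenvalues = A.charpoly.roots := by
  simp [hA.roots_charpoly_eq_eigenvalues]

theorem esym_eigenvalues_smul_one_add_vecMulVec {n k : ℕ} (hn : n ≠ 0) (hk : k ≠ 0) {r : ℝ}
    {u v : Fin n → ℝ} {A : Matrix (Fin n) (Fin n) ℝ} (hA : A.IsHermitian)
    (hAeq : A = r • 1 + vecMulVec u v) :
    esym univ k hA.eigenvalues = n.choose k * (r ^ k + k / n * (u ⬝ᵥ v) * r ^ (k - 1)) := by
  obtain ⟨m, rfl⟩ := Nat.exists_eq_add_one_of_ne_zero hn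
  obtain ⟨j, rfl⟩ := Nat.exists_eq_add_one_of_ne_zero hk
  rw [esym_eq_esymm, hA.map_eigenvalues_eq_roots, hAeq, charpoly_smul_one_add_vecMulVec,
    Polynomial.roots_multiset_prod_X_sub_C, Fintype.card_fin, Nat.add_sub_cancel,
    Multiset.esymm_cons_succ, Multiset.esymm_replicate, Multiset.esymm_replicate]
  have habsorb : ((m + 1 : ℕ) : ℝ) * m.choose j = (m + 1).choose (j + 1) * (j + 1 : ℕ) := by
    exact_mod_cast Nat.add_one_mul_choose_eq m j
  have hpascal : ((m + 1).choose (j + 1) : ℝ) = m.choose j + m.choose (j + 1) := by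
    exact_mod_cast Nat.choose_succ_succ' m j
  rw [Nat.add_sub_cancel]
  field_simp
  push_cast at habsorb ⊢
  linear_combination (u ⬝ᵥ v) * r ^ j * habsorb - (m + 1) * r ^ (j + 1) * hpascal

theorem sum_sq_pos_of_ne_zero {ι : Type*} [Fintype ι] {x : ι → ℝ} (hx : x ≠ 0) :
    0 < ∑ i, x i ^ 2 :=
  let ⟨i, hi⟩ := Function.ne_iff.mp hx
  sum_pos' (fun j _ => sq_nonneg (x j)) ⟨i, mem_univ i, pow_two_pos_of_ne_zero hi⟩

theorem hasFDerivAt_half_mul_sum_sq {n : ℕ} (c : ℝ) (y : Fin n → ℝ) :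
    HasFDerivAt (fun y : Fin n → ℝ => c / 2 * ∑ i, y i ^ 2)
      (∑ i, (c * y i) • ContinuousLinearMap.proj (R := ℝ) (φ := fun _ : Fin n => ℝ) i) y := by
  refine ((HasFDerivAt.fun_sum fun i (_ : i ∈ univ) =>
    (hasFDerivAt_apply (𝕜 := ℝ) i y).pow 2).const_mul (c / 2)).congr_fderiv ?_
  ext v
  simp only [_root_.smul_apply, _root_.sum_apply,
    ContinuousLinearMap.proj_apply, smul_eq_mul, Finset.mul_sum]
  exact Finset.sum_congr rfl fun i _ => by ring

theorem hess_comp_half_mul_sum_sq {n : ℕ} {f f' f'' : ℝ → ℝ} {c : ℝ} (hc : 0 < c)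
    (hf : ∀ t > 0, HasDerivAt f (f' t) t) (hf' : ∀ t > 0, HasDerivAt f' (f'' t) t)
    {x : Fin n → ℝ} (hx : x ≠ 0) :
    hess (fun y => f (c / 2 * ∑ i, y i ^ 2)) x
      = (c * f' (c / 2 * ∑ i, x i ^ 2)) • 1
        + (c ^ 2 * f'' (c / 2 * ∑ i, x i ^ 2)) • vecMulVec x x := by
  ext i j
  simp only [hess, Matrix.add_apply, Matrix.smul_apply, Matrix.one_apply, vecMulVec_apply,
    smul_eq_mul]
  set g : (Fin n → ℝ) → ℝ := fun y => c / 2 * ∑ i, y i ^ 2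
  have hgx : 0 < g x := by
    have := sum_sq_pos_of_ne_zero hx
    positivity
  have hg : Continuous g := by fun_prop
  have hgrad : (fun y => fderiv ℝ (fun y => f (g y)) y (Pi.single j 1))
      =ᶠ[nhds x] fun y => f' (g y) * (c * y j) := by
    filter_upwards [hg.continuousAt.eventually (Ioi_mem_nhds hgx)] with y hy
    have hfg : HasFDerivAt (fun y => f (g y)) _ y :=
      (hf _ hy).comp_hasFDerivAt y (hasFDerivAt_half_mul_sum_sq c y)
    simp [hfg.fderiv, Pi.single_apply]
  have hgrad_deriv : HasFDerivAt (fun y => f' (g y) * (c * y j)) _ x :=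
    ((hf' _ hgx).comp_hasFDerivAt x (hasFDerivAt_half_mul_sum_sq c x)).fun_mul
      ((hasFDerivAt_apply (𝕜 := ℝ) j x).const_mul c)
  rw [hgrad.fderiv_eq, hgrad_deriv.fderiv]
  simp only [Function.comp_apply, _root_.add_apply, _root_.smul_apply,
    _root_.sum_apply, ContinuousLinearMap.proj_apply, smul_eq_mul, Pi.single_apply, mul_ite,
    mul_one, mul_zero, Finset.sum_ite_eq', Finset.mem_univ, if_true, eq_comm (a := j)]
  split_ifs <;> ring

theorem esym_eigenvalues_hess_comp_half_mul_sum_sq {n k : ℕ} (hn : n ≠ 0) (hk : k ≠ 0)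
    {f f' f'' : ℝ → ℝ} {c : ℝ} (hc : 0 < c)
    (hf : ∀ t > 0, HasDerivAt f (f' t) t) (hf' : ∀ t > 0, HasDerivAt f' (f'' t) t)
    {x : Fin n → ℝ} (hx : x ≠ 0)
    (hM : (hess (fun y => f (c / 2 * ∑ i, y i ^ 2)) x).IsHermitian) :
    esym univ k hM.eigenvalues = n.choose k * c ^ k *
      (f' (c / 2 * ∑ i, x i ^ 2) ^ k + 2 * k * (c / 2 * ∑ i, x i ^ 2) / n
        * f'' (c / 2 * ∑ i, x i ^ 2) * f' (c / 2 * ∑ i, x i ^ 2) ^ (k - 1)) := by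
  have hhess := hess_comp_half_mul_sum_sq hc hf hf' hx
  rw [← smul_vecMulVec] at hhess
  rw [esym_eigenvalues_smul_one_add_vecMulVec hn hk hM hhess]
  have hdot : ∀ b : ℝ, (b • x) ⬝ᵥ x = b * ∑ i, x i ^ 2 := fun b => by
    simp [dotProduct, Finset.mul_sum, sq, mul_assoc]
  obtain ⟨j, rfl⟩ := Nat.exists_eq_add_one_of_ne_zero hk
  rw [hdot, Nat.add_sub_cancel]
  ring

theorem hasDerivAt_integral_of_continuousOn_Ioi {φ : ℝ → ℝ} (hφ : ContinuousOn φ (Set.Ioi 0))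
    {a s : ℝ} (ha : 0 < a) (hs : 0 < s) :
    HasDerivAt (fun s => ∫ t in a..s, φ t) (φ s) s := by
  have hsub : Set.uIcc a s ⊆ Set.Ioi 0 := fun t ht => (lt_min ha hs).trans_le ht.1
  exact intervalIntegral.integral_hasDerivAt_right ((hφ.mono hsub).intervalIntegrable)
    (hφ.stronglyMeasurableAtFilter isOpen_Ioi s hs) (hφ.continuousAt (Ioi_mem_nhds hs))

theorem deriv_deriv_of_hasDerivAt_Ioi {f g : ℝ → ℝ} (hf : ∀ t > 0, HasDerivAt f (g t) t)
    {s : ℝ} (hs : 0 < s) : deriv (deriv f) s = deriv g s :=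
  (Filter.eventuallyEq_of_mem (Ioi_mem_nhds hs) fun t ht => (hf t ht).deriv).deriv_eq

noncomputable def omegaBarDeriv (n k : ℕ) (α t : ℝ) : ℝ :=
  (1 + α * t ^ (-(n : ℝ) / 2)) ^ ((1 : ℝ) / k)

section omegaBarDeriv

variable {n k : ℕ} {α : ℝ}

theorem differentiableAt_omegaBarDeriv (hα : 0 ≤ α) {t : ℝ} (ht : 0 < t) :
    DifferentiableAt ℝ (omegaBarDeriv n k α) t :=
  DifferentiableAt.rpow_const (by fun_prop (disch := exact ht.ne')) (Or.inl (by positivity))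

theorem continuousOn_omegaBarDeriv (hα : 0 ≤ α) : ContinuousOn (omegaBarDeriv n k α) (Set.Ioi 0) :=
  fun _ ht => (differentiableAt_omegaBarDeriv hα ht).continuousAt.continuousWithinAt

theorem omegaBarDeriv_pow (hk : k ≠ 0) (hα : 0 ≤ α) {t : ℝ} (ht : 0 < t) :
    omegaBarDeriv n k α t ^ k = 1 + α * t ^ (-(n : ℝ) / 2) := by
  rw [omegaBarDeriv, one_div, Real.rpow_inv_natCast_pow (by positivity) hk]

theorem omegaBarDeriv_ode (hn : n ≠ 0) (hk : k ≠ 0) (hα : 0 ≤ α) {s : ℝ} (hs : 0 < s) :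
    omegaBarDeriv n k α s ^ k
      + 2 * k * s / n * deriv (omegaBarDeriv n k α) s * omegaBarDeriv n k α s ^ (k - 1) = 1 := by
  have hpow : HasDerivAt (fun t => omegaBarDeriv n k α t ^ k)
      (k * omegaBarDeriv n k α s ^ (k - 1) * deriv (omegaBarDeriv n k α) s) s :=
    (differentiableAt_omegaBarDeriv hα hs).hasDerivAt.pow k
  have hbase : HasDerivAt (fun t => 1 + α * t ^ (-(n : ℝ) / 2))
      (α * (-(n : ℝ) / 2 * s ^ (-(n : ℝ) / 2 - 1))) s :=
    ((Real.hasDerivAt_rpow_const (Or.inl hs.ne')).const_mul α).const_add 1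
  have heq : (fun t => omegaBarDeriv n k α t ^ k) =ᶠ[nhds s] fun t => 1 + α * t ^ (-(n : ℝ) / 2) :=
    Filter.eventuallyEq_of_mem (Ioi_mem_nhds hs) fun t ht => omegaBarDeriv_pow hk hα ht
  have hchain := (hpow.congr_of_eventuallyEq heq.symm).unique hbase
  rw [omegaBarDeriv_pow hk hα hs]
  have hn' : (n : ℝ) ≠ 0 := by exact_mod_cast hn
  calc _ = 1 + α * s ^ (-(n : ℝ) / 2) + 2 * s / n * (k * omegaBarDeriv n k α s ^ (k - 1)
        * deriv (omegaBarDeriv n k α) s) := by ring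
    _ = 1 := by rw [hchain, Real.rpow_sub_one hs.ne']; field_simp; ring

end omegaBarDeriv

theorem eq_rpow_neg_one_div_of_mul_pow_eq_one {N c : ℝ} {k : ℕ} (hc : 0 ≤ c) (hk : k ≠ 0)
    (h : N * c ^ k = 1) : c = N ^ (-1 / k : ℝ) := by
  have hN : 0 ≤ N := by
    by_contra! hN
    nlinarith [pow_nonneg hc k]
  calc c = (c ^ k) ^ ((k : ℝ)⁻¹) := (Real.pow_rpow_inv_natCast hc hk).symm
    _ = N⁻¹ ^ ((k : ℝ)⁻¹) := by rw [eq_inv_of_mul_eq_one_right h]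
    _ = _ := by rw [Real.inv_rpow hN, ← Real.rpow_neg hN, neg_div, one_div]

theorem stmt_19_general (n k : ℕ) (hk : 2 ≤ k)
    (c : ℝ) (hc : 0 < c) (hsk : esym Finset.univ k (fun _ : Fin n => c) = 1)
    (α : ℝ) (hα : 0 < α)
    (ω : ℝ → ℝ)
    (hω : ∀ s, ω s = ∫ t in (1 : ℝ)..s, (1 + α * t ^ (-(n : ℝ) / 2)) ^ ((1 : ℝ) / k))
    (u : (Fin n → ℝ) → ℝ)
    (hu : ∀ x, u x = ω (c / 2 * ∑ i, x i ^ 2)) :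
    c = ((n.choose k : ℝ)) ^ (-(1 : ℝ) / k) ∧
    (∀ s > (0 : ℝ),
      (deriv ω s) ^ k
        + 2 * (k : ℝ) * s / n * deriv (deriv ω) s * (deriv ω s) ^ (k - 1) = 1) ∧
    (∀ x : Fin n → ℝ, x ≠ 0 →
      ∀ hM : (hess u x).IsHermitian, esym Finset.univ k hM.eigenvalues = 1) := by
  have hk0 : k ≠ 0 := by omega
  have hchoose : (n.choose k : ℝ) * c ^ k = 1 := by simpa [esym_const] using hsk
  have hn0 : n ≠ 0 := by
    rintro rfl
    simp [Nat.choose_eq_zero_of_lt (Nat.pos_of_ne_zero hk0)] at hchoose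
  obtain rfl : u = fun y => ω (c / 2 * ∑ i, y i ^ 2) := funext hu
  have hω' : ∀ s > 0, HasDerivAt ω (omegaBarDeriv n k α s) s := fun s hs => by
    rw [funext hω]
    exact hasDerivAt_integral_of_continuousOn_Ioi (continuousOn_omegaBarDeriv hα.le) one_pos hs
  have hω'' : ∀ s > 0, HasDerivAt (omegaBarDeriv n k α) (deriv (omegaBarDeriv n k α) s) s :=
    fun s hs => (differentiableAt_omegaBarDeriv hα.le hs).hasDerivAt
  refine ⟨eq_rpow_neg_one_div_of_mul_pow_eq_one hc.le hk0 hchoose, fun s hs => ?_,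
    fun x hx hM => ?_⟩
  · rw [(hω' s hs).deriv, deriv_deriv_of_hasDerivAt_Ioi hω' hs]
    exact omegaBarDeriv_ode hn0 hk0 hα.le hs
  · have hs : 0 < c / 2 * ∑ i, x i ^ 2 := by have := sum_sq_pos_of_ne_zero hx; positivity
    rw [esym_eigenvalues_hess_comp_half_mul_sum_sq hn0 hk0 hc hω' hω'' hx,
      omegaBarDeriv_ode hn0 hk0 hα.le hs, mul_one, hchoose]

/-- In the radially symmetric case `a₁ = ⋯ = aₙ = c` with `σ_k(a) = 1`, one has
`c = (n choose k)^{-1/k}`; the function `ω̄_k(s) = ∫₁ˢ (1 + α t^{-n/2})^{1/k} dt` solves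
`(ω')^k + (2ks/n) ω'' (ω')^{k-1} = 1` on `(0,∞)`, and `u(x) = ω̄_k(c|x|²/2)` satisfies
`σ_k(λ(D²u)) = 1` in `ℝⁿ \ {0}`. -/
theorem stmt_19 (n k : ℕ) (hn : 3 ≤ n) (hk : 2 ≤ k) (hkn : k ≤ n - 1)
    (c : ℝ) (hc : 0 < c) (hsk : esym Finset.univ k (fun _ : Fin n => c) = 1)
    (α : ℝ) (hα : 0 < α)
    (ω : ℝ → ℝ)
    (hω : ∀ s, ω s = ∫ t in (1 : ℝ)..s, (1 + α * t ^ (-(n : ℝ) / 2)) ^ ((1 : ℝ) / k))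
    (u : (Fin n → ℝ) → ℝ)
    (hu : ∀ x, u x = ω (c / 2 * ∑ i, x i ^ 2)) :
    c = ((n.choose k : ℝ)) ^ (-(1 : ℝ) / k) ∧
    (∀ s > (0 : ℝ),
      (deriv ω s) ^ k
        + 2 * (k : ℝ) * s / n * deriv (deriv ω) s * (deriv ω s) ^ (k - 1) = 1) ∧
    (∀ x : Fin n → ℝ, x ≠ 0 →
      ∀ hM : (hess u x).IsHermitian, esym Finset.univ k hM.eigenvalues = 1) :=
  stmt_19_general n k hk c hc hsk α hα ω hω u hu
end
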